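/- arXiv:1309.1771 — 2 statements merged into one kernel-verified Lean document; each statement's English description precedes it below -/
import Mathlib

section
/- Every simplicial even walk C_{α,β} = F_{i_1}, F_{j_1}, …, F_{i_s}, F_{j_s} contains at least 4 distinct facets; that is, the set of facets {F_{i_1}, F_{j_1}, …, F_{i_s}, F_{j_s}} has cardinality at least 4. -/
/-!
If all entries of `α` name the same facet `F_i`, pick any `j ∈ supp β`: the walk condition
yields `x ∈ F_i \ F_j` with `deg_α x ≤ deg_β x`, but `deg_α x = s` while `deg_β x < s` since
`x ∉ F_j`. So `α` and, symmetrically, `β` each visit at least two facets, and these are distinct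
across `α` and `β` because the supports are disjoint and distinct indices give distinct facets.
-/

open Finset

/-- The `α`-degree of a vertex `x` : the number of entries `t` of the tuple `α`
with `x ∈ F (α t)`, counted with multiplicity. -/
def walkDeg {V : Type*} [DecidableEq V] {q s : ℕ} (F : Fin q → Finset V)
    (α : Fin s → Fin q) (x : V) : ℕ :=
  (Finset.univ.filter fun t : Fin s => x ∈ F (α t)).card

/-- The sequence of facets `C_{α,β} = F_{i_1},F_{j_1},…,F_{i_s},F_{j_s}` is a
simplicial even walk. -/
def IsEvenWalk {V : Type*} [DecidableEq V] {q s : ℕ} (F : Fin q → Finset V)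
    (α β : Fin s → Fin q) : Prop :=
  2 ≤ s ∧ Disjoint (Set.range α) (Set.range β) ∧
    ∀ i ∈ Set.range α, ∀ j ∈ Set.range β,
      ¬ (↑(F i \ F j) ⊆ {x : V | walkDeg F β x < walkDeg F α x}) ∧
      ¬ (↑(F j \ F i) ⊆ {x : V | walkDeg F α x < walkDeg F β x})

/-- The facets of a simplicial complex: each is nonempty, and none contains another. -/
def IsFacetFamily {V : Type*} [DecidableEq V] {q : ℕ} (F : Fin q → Finset V) : Prop :=
  (∀ i, (F i).Nonempty) ∧ ∀ i j : Fin q, F i ⊆ F j → i = j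

lemma disjoint_image_univ_comp {ι κ β : Type*} [Fintype ι] [DecidableEq β] {g : κ → β}
    (hg : Function.Injective g) {f₁ f₂ : ι → κ}
    (h : Disjoint (Set.range f₁) (Set.range f₂)) :
    Disjoint (univ.image fun t => g (f₁ t)) (univ.image fun t => g (f₂ t)) := by
  rw [← disjoint_coe, coe_image, coe_image, coe_univ, Set.image_univ, Set.image_univ,
    Set.range_comp' g f₁, Set.range_comp' g f₂]
  exact (Set.disjoint_image_iff hg).mpr h

lemma one_lt_card_image_of_ne {ι β : Type*} [Fintype ι] [DecidableEq β] {f : ι → β}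
    {a b : ι} (hne : f a ≠ f b) : 1 < (univ.image f).card :=
  one_lt_card.mpr
    ⟨f a, mem_image_of_mem f (mem_univ a), f b, mem_image_of_mem f (mem_univ b), hne⟩

section

variable {V : Type*} [DecidableEq V] {q s : ℕ} {F : Fin q → Finset V}

lemma IsFacetFamily.injective (hF : IsFacetFamily F) : Function.Injective F :=
  fun i j hij => hF.2 i j hij.le

lemma walkDeg_eq_iff_forall_mem {α : Fin s → Fin q} {x : V} :
    walkDeg F α x = s ↔ ∀ t, x ∈ F (α t) := by
  simpa [walkDeg] using
    card_filter_eq_iff (s := (univ : Finset (Fin s))) (p := fun t => x ∈ F (α t))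

lemma walkDeg_le (F : Fin q → Finset V) (α : Fin s → Fin q) (x : V) : walkDeg F α x ≤ s :=
  (card_filter_le _ _).trans (card_fin s).le

namespace IsEvenWalk

lemma symm {α β : Fin s → Fin q} (h : IsEvenWalk F α β) : IsEvenWalk F β α :=
  ⟨h.1, h.2.1.symm, fun j hj i hi => ⟨(h.2.2 i hi j hj).2, (h.2.2 i hi j hj).1⟩⟩

lemma exists_ne_left {α β : Fin s → Fin q} (h : IsEvenWalk F α β) :
    ∃ t₁ t₂, α t₁ ≠ α t₂ := by
  by_contra! hconst
  let t₀ : Fin s := ⟨0, by have := h.1; omega⟩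
  obtain ⟨x, hx, hdeg⟩ :=
    Set.not_subset.mp (h.2.2 (α t₀) ⟨t₀, rfl⟩ (β t₀) ⟨t₀, rfl⟩).1
  rw [coe_sdiff, Set.mem_sdiff, mem_coe, mem_coe] at hx
  have hα : walkDeg F α x = s := walkDeg_eq_iff_forall_mem.mpr fun t => hconst t t₀ ▸ hx.1
  have hβ : walkDeg F β x ≠ s := fun hβ => hx.2 (walkDeg_eq_iff_forall_mem.mp hβ t₀)
  have := walkDeg_le F β x
  exact hdeg (show walkDeg F β x < walkDeg F α x by omega)

end IsEvenWalk

end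

theorem stmt2 {V : Type*} [DecidableEq V] {q s : ℕ} (F : Fin q → Finset V)
    (hF : IsFacetFamily F) (α β : Fin s → Fin q) (h : IsEvenWalk F α β) :
    4 ≤ ((Finset.univ.image fun t : Fin s => F (α t)) ∪
          (Finset.univ.image fun t : Fin s => F (β t))).card := by
  have hdisj := disjoint_image_univ_comp hF.injective h.2.1
  obtain ⟨a₁, a₂, ha⟩ := h.exists_ne_left
  obtain ⟨b₁, b₂, hb⟩ := h.symm.exists_ne_left
  have hA := one_lt_card_image_of_ne (f := fun t => F (α t)) (hF.injective.ne ha)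
  have hB := one_lt_card_image_of_ne (f := fun t => F (β t)) (hF.injective.ne hb)
  rw [card_union_of_disjoint hdisj]
  omega
end

section
/- Let Δ = ⟨F_1,…,F_q⟩ be a simplicial complex with facet ideal I = (f_1,…,f_q) in R = K[x_1,…,x_n], and let J ⊆ S = R[T_1,…,T_q] be the defining ideal of the Rees algebra of I. Then J = J_1·S + (⋃_{i≥2} P_i)·S, where P_i = {T_{α,β} : α, β tuples of length i with disjoint supports such that C_{α,β} is a simplicial even walk}. -/
open Finset MvPolynomial

/-- The squarefree monomial `f_i = ∏_{x ∈ F_i} x` of a facet `F_i`. -/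
noncomputable def facetMonomial (K : Type*) [Field K] {n q : ℕ}
    (F : Fin q → Finset (Fin n)) (i : Fin q) : MvPolynomial (Fin n) K :=
  ∏ x ∈ F i, X x

/-- The `R`-algebra map `ψ : S = R[T_1,…,T_q] → R[t]`, `T_i ↦ f_i·t`. -/
noncomputable def reesHom (K : Type*) [Field K] {n q : ℕ} (F : Fin q → Finset (Fin n)) :
    MvPolynomial (Fin q) (MvPolynomial (Fin n) K) →ₐ[MvPolynomial (Fin n) K]
      Polynomial (MvPolynomial (Fin n) K) :=
  aeval fun i : Fin q => Polynomial.C (facetMonomial K F i) * Polynomial.X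

/-- The defining ideal `J = ker ψ` of the Rees algebra `R[It]`. -/
noncomputable def reesIdeal (K : Type*) [Field K] {n q : ℕ} (F : Fin q → Finset (Fin n)) :
    Ideal (MvPolynomial (Fin q) (MvPolynomial (Fin n) K)) :=
  RingHom.ker (reesHom K F)

/-- The ideal generated by the facet monomials is of linear type: its Rees ideal `J`
is generated by its elements that are homogeneous of degree `1` in `T_1,…,T_q`. -/
def IsLinearType (K : Type*) [Field K] {n q : ℕ} (F : Fin q → Finset (Fin n)) : Prop :=
  reesIdeal K F = Ideal.span {g | g ∈ reesIdeal K F ∧ g.IsHomogeneous 1}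

/-- The Taylor binomial `T_{α,β} = (lcm(f_α,f_β)/f_α)·T_α - (lcm(f_α,f_β)/f_β)·T_β`
for the squarefree monomials `f_i = ∏_{x ∈ F_i} x`: the exponent of `x` in `f_α` is
`walkDeg F α x`, so `lcm(f_α,f_β)/f_α` has exponent vector
`x ↦ walkDeg F β x - walkDeg F α x` (truncated subtraction). -/
noncomputable def Tsf (K : Type*) [Field K] {n q s : ℕ} (F : Fin q → Finset (Fin n))
    (α β : Fin s → Fin q) : MvPolynomial (Fin q) (MvPolynomial (Fin n) K) :=
  C (monomial (Finsupp.equivFunOnFinite.symm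
        fun x : Fin n => walkDeg F β x - walkDeg F α x) (1 : K)) * ∏ t, X (α t) -
  C (monomial (Finsupp.equivFunOnFinite.symm
        fun x : Fin n => walkDeg F α x - walkDeg F β x) (1 : K)) * ∏ t, X (β t)

/-!
The map `ψ` sends each monomial `x^u T_α` of `S` to the monomial `x^(u + deg_α) t^s`, so its
kernel is spanned over `K` by the binomials `x^u T_α - x^u' T_β` with equal images, and each of
these is a monomial multiple of `T_{α,β}`. It remains to reach every `T_{α,β}` from the even
walks, by induction on the length `s`. A facet shared by `α` and `β` factors out:
`T_{α,β} = T_k T_{α',β'}`. If `C_{α,β}` is not an even walk, say `F_i \ F_j ⊆ {deg_α > deg_β}`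
with `i` in `α` and `j` in `β`, then replacing `j` by `i` in `β` gives `β'` with
`deg_β' ≤ max(deg_α, deg_β)`, and `T_{α,β}` is a combination of `T_{α,β'}`, which shares the
facet `F_i`, and `T_{β',β}`, a multiple of the linear binomial `T_{i,j}`.
-/

theorem Submodule.mem_of_map_eq_zero_of_sub_mem {K M N ι κ : Type*} [Ring K]
    [AddCommGroup M] [Module K M] [AddCommGroup N] [Module K N] (f : M →ₗ[K] N)
    {e : ι → M} {b : κ → N} (hb : LinearIndependent K b) (φ : ι → κ)
    (hfe : ∀ i, f (e i) = b (φ i)) {P : Submodule K M}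
    (hP : ∀ i j, φ i = φ j → e i - e j ∈ P) {g : M} (hg : g ∈ span K (Set.range e))
    (hfg : f g = 0) : g ∈ P := by
  classical
  obtain ⟨c, rfl⟩ := Finsupp.mem_span_range_iff_exists_finsupp.1 hg
  have hmaps : ∀ i ∈ c.support, φ i ∈ c.support.image φ := fun i hi =>
    mem_image_of_mem φ hi
  have hfiber : ∀ k ∈ c.support.image φ, ∑ i ∈ c.support with φ i = k, c i = 0 := by
    refine linearIndependent_iff'.1 hb _ _ ?_
    rw [← hfg, Finsupp.sum, map_sum, ← sum_fiberwise_of_maps_to hmaps]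
    refine sum_congr rfl fun k _ => ?_
    rw [sum_smul]
    refine sum_congr rfl fun i hi => ?_
    rw [map_smul, hfe, (mem_filter.1 hi).2]
  rw [Finsupp.sum, ← sum_fiberwise_of_maps_to hmaps]
  refine sum_mem fun k hk => ?_
  obtain ⟨j, -, rfl⟩ := mem_image.1 hk
  have hsub : ∑ i ∈ c.support with φ i = φ j, c i • e i =
      ∑ i ∈ c.support with φ i = φ j, c i • (e i - e j) := by
    simp only [smul_sub, sum_sub_distrib, ← sum_smul, hfiber _ hk, zero_smul, sub_zero]
  rw [hsub]
  exact sum_mem fun i hi => P.smul_mem _ (hP _ _ (mem_filter.1 hi).2)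

section
variable {K : Type*} [Field K] {n q : ℕ} (F : Fin q → Finset (Fin n))

local notation "𝒮" => MvPolynomial (Fin q) (MvPolynomial (Fin n) K)

noncomputable def facetExp (i : Fin q) : Fin n →₀ ℕ := ∑ x ∈ F i, Finsupp.single x 1

noncomputable def walkExp {s : ℕ} (α : Fin s → Fin q) : Fin n →₀ ℕ :=
  ∑ t, facetExp F (α t)

lemma facetExp_apply (i : Fin q) (x : Fin n) : facetExp F i x = if x ∈ F i then 1 else 0 := by
  simp [facetExp, Finsupp.finsetSum_apply, Finsupp.single_apply]

lemma walkExp_apply {s : ℕ} (α : Fin s → Fin q) (x : Fin n) :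
    walkExp F α x = walkDeg F α x := by
  simp [walkExp, walkDeg, Finsupp.finsetSum_apply, facetExp_apply]

lemma facetMonomial_eq_monomial (i : Fin q) :
    facetMonomial K F i = monomial (facetExp F i) 1 := by
  rw [facetExp, monomial_sum_one]
  rfl

lemma walkExp_succAbove {m : ℕ} (α : Fin (m + 1) → Fin q) (t : Fin (m + 1)) :
    walkExp F α = facetExp F (α t) + walkExp F (fun u => α (t.succAbove u)) :=
  Fin.sum_univ_succAbove _ t

lemma walkExp_eq_sum_erase_add {s : ℕ} (α : Fin s → Fin q) (t : Fin s) :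
    walkExp F α = ∑ u ∈ univ.erase t, facetExp F (α u) + facetExp F (α t) :=
  (sum_erase_add _ _ (mem_univ t)).symm

lemma walkExp_update_le {s : ℕ} (α γ : Fin s → Fin q) (t : Fin s) (i : Fin q)
    (h : ∀ x ∈ F i \ F (γ t), walkDeg F γ x < walkDeg F α x) :
    walkExp F (Function.update γ t i) ≤ walkExp F α ⊔ walkExp F γ := by
  have hrest : ∑ u ∈ univ.erase t, facetExp F (Function.update γ t i u) =
      ∑ u ∈ univ.erase t, facetExp F (γ u) :=
    sum_congr rfl fun u hu => by rw [Function.update_of_ne (ne_of_mem_erase hu)]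
  intro x
  have hγ := congrArg (· x) (walkExp_eq_sum_erase_add F γ t)
  rw [walkExp_eq_sum_erase_add F _ t, hrest, Function.update_self]
  simp only [Finsupp.add_apply, Finsupp.sup_apply, le_sup_iff, facetExp_apply,
    walkExp_apply] at hγ ⊢
  by_cases hi : x ∈ F i
  · by_cases hγt : x ∈ F (γ t)
    · simp only [hi, hγt, if_true] at hγ ⊢
      omega
    · have := h x (mem_sdiff.2 ⟨hi, hγt⟩)
      simp only [hi, hγt, if_true, if_false] at hγ ⊢
      omega
  · simp only [hi, if_false]
    omega

-- `T_{α,β}` for `f_α = x^a`, `f_β = x^b`, `T_α = P`, `T_β = Q`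
noncomputable def lcmBinomial (a b : Fin n →₀ ℕ) (P Q : 𝒮) : 𝒮 :=
  C (monomial (b - a) 1) * P - C (monomial (a - b) 1) * Q

lemma C_monomial_one_mul_C_monomial_one (a b : Fin n →₀ ℕ) :
    (C (monomial a 1) * C (monomial b 1) : 𝒮) = C (monomial (a + b) 1) := by
  rw [← map_mul, monomial_mul, one_mul]

lemma lcmBinomial_add_add_mul (a b c : Fin n →₀ ℕ) (M P Q : 𝒮) :
    lcmBinomial (c + a) (c + b) (M * P) (M * Q) = M * lcmBinomial a b P Q := by
  simp only [lcmBinomial, add_tsub_add_eq_tsub_left]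
  ring

lemma lcmBinomial_eq_add {a b w : Fin n →₀ ℕ} (h : w ≤ a ⊔ b) (P Q R : 𝒮) :
    lcmBinomial a b P Q =
      C (monomial (a ⊔ b - a ⊔ w) 1) * lcmBinomial a w P R +
        C (monomial (a ⊔ b - w ⊔ b) 1) * lcmBinomial w b R Q := by
  have hx : ∀ x, w x ≤ max (a x) (b x) := h
  have h₁ : a ⊔ b - a ⊔ w + (w - a) = b - a := by
    ext x
    simp only [Finsupp.add_apply, Finsupp.tsub_apply, Finsupp.sup_apply]
    have := hx x
    omega
  have h₂ : a ⊔ b - a ⊔ w + (a - w) = a ⊔ b - w ⊔ b + (b - w) := by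
    ext x
    simp only [Finsupp.add_apply, Finsupp.tsub_apply, Finsupp.sup_apply]
    have := hx x
    omega
  have h₃ : a ⊔ b - w ⊔ b + (w - b) = a - b := by
    ext x
    simp only [Finsupp.add_apply, Finsupp.tsub_apply, Finsupp.sup_apply]
    have := hx x
    omega
  simp only [lcmBinomial, mul_sub, ← mul_assoc, C_monomial_one_mul_C_monomial_one, h₁, h₂,
    h₃]
  ring

lemma Tsf_eq_lcmBinomial {s : ℕ} (α β : Fin s → Fin q) :
    Tsf K F α β =
      lcmBinomial (walkExp F α) (walkExp F β) (∏ t, X (α t)) (∏ t, X (β t)) := by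
  have h : ∀ γ δ : Fin s → Fin q, Finsupp.equivFunOnFinite.symm
      (fun x => walkDeg F γ x - walkDeg F δ x) = walkExp F γ - walkExp F δ := fun γ δ => by
    ext x; simp [walkExp_apply]
  rw [Tsf, lcmBinomial, h, h]

lemma Tsf_eq_X_mul_of_eq {m : ℕ} (α β : Fin (m + 1) → Fin q) {t t' : Fin (m + 1)}
    (h : α t = β t') :
    Tsf K F α β =
      X (α t) * Tsf K F (fun u => α (t.succAbove u)) (fun u => β (t'.succAbove u)) := by
  rw [Tsf_eq_lcmBinomial, Tsf_eq_lcmBinomial, walkExp_succAbove F α t, walkExp_succAbove F β t',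
    Fin.prod_univ_succAbove _ t, Fin.prod_univ_succAbove _ t', h, lcmBinomial_add_add_mul]

lemma Tsf_eq_mul_of_eqOn_ne {s : ℕ} (γ δ : Fin s → Fin q) (t : Fin s)
    (h : ∀ u, u ≠ t → γ u = δ u) :
    Tsf K F γ δ = (∏ u ∈ univ.erase t, X (γ u)) *
      Tsf K F (fun _ : Fin 1 => γ t) (fun _ : Fin 1 => δ t) := by
  have hexp :
      ∑ u ∈ univ.erase t, facetExp F (δ u) = ∑ u ∈ univ.erase t, facetExp F (γ u) :=
    sum_congr rfl fun u hu => by rw [h u (ne_of_mem_erase hu)]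
  have hprod : ∏ u ∈ univ.erase t, X (δ u) = (∏ u ∈ univ.erase t, X (γ u) : 𝒮) :=
    prod_congr rfl fun u hu => by rw [h u (ne_of_mem_erase hu)]
  rw [Tsf_eq_lcmBinomial, Tsf_eq_lcmBinomial, walkExp_eq_sum_erase_add F γ t,
    walkExp_eq_sum_erase_add F δ t, hexp, ← prod_erase_mul _ _ (mem_univ t),
    ← prod_erase_mul _ _ (mem_univ t), hprod, lcmBinomial_add_add_mul]
  simp [walkExp]

lemma reesHom_prod_X {s : ℕ} (α : Fin s → Fin q) :
    reesHom K F (∏ t, X (α t)) =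
      Polynomial.C (monomial (walkExp F α) 1) * Polynomial.X ^ s := by
  simp_rw [map_prod, reesHom, aeval_X, facetMonomial_eq_monomial]
  rw [prod_mul_distrib, ← map_prod, ← monomial_sum_one, prod_const, card_univ,
    Fintype.card_fin, walkExp]

lemma reesHom_C_monomial_mul_prod_X (u : Fin n →₀ ℕ) {s : ℕ} (α : Fin s → Fin q) :
    reesHom K F (C (monomial u 1) * ∏ t, X (α t)) =
      Polynomial.monomial s (monomial (u + walkExp F α) 1) := by
  have hC : reesHom K F (C (monomial u 1)) = Polynomial.C (monomial u 1) :=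
    (reesHom K F).commutes _
  rw [map_mul, hC, reesHom_prod_X, ← mul_assoc, ← Polynomial.C_mul, monomial_mul, one_mul,
    Polynomial.C_mul_X_pow_eq_monomial]

lemma Tsf_mem_reesIdeal {s : ℕ} (α β : Fin s → Fin q) : Tsf K F α β ∈ reesIdeal K F := by
  have h : walkExp F β - walkExp F α + walkExp F α =
      walkExp F α - walkExp F β + walkExp F β := by
    ext x
    simp only [Finsupp.add_apply, Finsupp.tsub_apply]
    omega
  rw [reesIdeal, RingHom.mem_ker, Tsf_eq_lcmBinomial, lcmBinomial, map_sub,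
    reesHom_C_monomial_mul_prod_X, reesHom_C_monomial_mul_prod_X, h, sub_self]

lemma Tsf_isHomogeneous {s : ℕ} (α β : Fin s → Fin q) : (Tsf K F α β).IsHomogeneous s := by
  have h : ∀ (u : Fin n →₀ ℕ) (γ : Fin s → Fin q),
      (C (monomial u 1) * ∏ t, X (γ t) : 𝒮).IsHomogeneous s := by
    intro u γ
    simpa using (isHomogeneous_C (Fin q) (monomial u (1 : K))).mul
      (IsHomogeneous.prod univ _ _ fun t _ => isHomogeneous_X _ (γ t))
  exact (h _ _).sub (h _ _)

lemma Tsf_self {s : ℕ} (α : Fin s → Fin q) : Tsf K F α α = 0 := sub_self _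

lemma Tsf_swap {s : ℕ} (α β : Fin s → Fin q) : Tsf K F α β = -Tsf K F β α :=
  (neg_sub _ _).symm

lemma C_monomial_mul_prod_X_sub {s : ℕ} {u u' : Fin n →₀ ℕ} {α β : Fin s → Fin q}
    (h : u + walkExp F α = u' + walkExp F β) :
    C (monomial u 1) * ∏ t, X (α t) - C (monomial u' 1) * ∏ t, X (β t) =
      C (monomial (u - (walkExp F β - walkExp F α)) 1) * Tsf K F α β := by
  have h₁ : u - (walkExp F β - walkExp F α) + (walkExp F β - walkExp F α) = u := by
    ext x
    have := congrArg (· x) h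
    simp only [Finsupp.add_apply, Finsupp.tsub_apply] at *
    omega
  have h₂ : u - (walkExp F β - walkExp F α) + (walkExp F α - walkExp F β) = u' := by
    ext x
    have := congrArg (· x) h
    simp only [Finsupp.add_apply, Finsupp.tsub_apply] at *
    omega
  rw [Tsf_eq_lcmBinomial, lcmBinomial, mul_sub, ← mul_assoc, ← mul_assoc,
    C_monomial_one_mul_C_monomial_one, C_monomial_one_mul_C_monomial_one, h₁, h₂]

lemma mem_span_C_monomial_mul_prod_X (g : 𝒮) :
    g ∈ Submodule.span K (Set.range fun i : Σ s, (Fin n →₀ ℕ) × (Fin s → Fin q) =>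
      C (monomial i.2.1 1) * ∏ t, X (i.2.2 t)) := by
  induction g using MvPolynomial.induction_on with
  | C r =>
    have hr := Submodule.apply_mem_span_image_of_mem_span
      ((Algebra.linearMap (MvPolynomial (Fin n) K) 𝒮).restrictScalars K)
      ((basisMonomials (Fin n) K).mem_span r)
    refine Submodule.span_mono ?_ hr
    rintro _ ⟨_, ⟨u, rfl⟩, rfl⟩
    exact ⟨⟨0, u, Fin.elim0⟩, by simp⟩
  | add p p' hp hp' => exact add_mem hp hp'
  | mul_X p k hp =>
    have hpk := Submodule.apply_mem_span_image_of_mem_span (LinearMap.mulRight K (X k)) hp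
    refine Submodule.span_mono ?_ hpk
    rintro _ ⟨_, ⟨⟨s, u, α⟩, rfl⟩, rfl⟩
    exact ⟨⟨s + 1, u, Fin.snoc α k⟩, by simp [Fin.prod_univ_castSucc, mul_assoc]⟩

lemma linearIndependent_monomial_monomial :
    LinearIndependent K fun k : ℕ × (Fin n →₀ ℕ) =>
      Polynomial.monomial k.1 (monomial k.2 (1 : K)) := by
  classical
  refine linearIndependent_iff'.2 fun s c hc k hk => ?_
  have := congrArg (fun p => coeff k.2 (p.coeff k.1)) hc
  simpa [Polynomial.finsetSum_coeff, coeff_sum, Polynomial.coeff_monomial, coeff_monomial,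
    apply_ite (coeff k.2), ← ite_and, ← Prod.ext_iff, hk] using this

lemma reesIdeal_le_span_Tsf :
    reesIdeal K F ≤
      Ideal.span {p | ∃ (s : ℕ) (α β : Fin s → Fin q), p = Tsf K F α β} := by
  intro g hg
  refine Submodule.mem_of_map_eq_zero_of_sub_mem ((reesHom K F).toLinearMap.restrictScalars K)
    (e := fun i : Σ s, (Fin n →₀ ℕ) × (Fin s → Fin q) =>
      C (monomial i.2.1 1) * ∏ t, X (i.2.2 t))
    linearIndependent_monomial_monomial (fun i => (i.1, i.2.1 + walkExp F i.2.2))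
    (fun i => reesHom_C_monomial_mul_prod_X F i.2.1 i.2.2) (P := (Ideal.span _).restrictScalars K)
    ?_ (mem_span_C_monomial_mul_prod_X g) hg
  rintro ⟨s, u, α⟩ ⟨s', u', β⟩ h
  obtain ⟨rfl, h⟩ := Prod.ext_iff.1 h
  rw [Submodule.restrictScalars_mem, C_monomial_mul_prod_X_sub F h]
  exact Ideal.mul_mem_left _ _ (Ideal.subset_span ⟨s, α, β, rfl⟩)

lemma Tsf_mem_of_sdiff_subset {I : Ideal 𝒮} {m : ℕ}
    (h₁ : ∀ α β : Fin 1 → Fin q, Tsf K F α β ∈ I)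
    (hm : ∀ α β : Fin m → Fin q, Tsf K F α β ∈ I)
    {α β : Fin (m + 1) → Fin q} {t t' : Fin (m + 1)}
    (hsub : ↑(F (α t) \ F (β t')) ⊆ {x | walkDeg F β x < walkDeg F α x}) :
    Tsf K F α β ∈ I := by
  set β' := Function.update β t' (α t)
  have hle : walkExp F β' ≤ walkExp F α ⊔ walkExp F β :=
    walkExp_update_le F α β t' (α t) fun x hx => hsub (by simpa using hx)
  rw [Tsf_eq_lcmBinomial, lcmBinomial_eq_add hle _ _ (∏ u, X (β' u)), ← Tsf_eq_lcmBinomial,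
    ← Tsf_eq_lcmBinomial]
  refine I.add_mem (I.mul_mem_left _ ?_) (I.mul_mem_left _ ?_)
  · rw [Tsf_eq_X_mul_of_eq F α β' (t := t) (t' := t') (by simp [β'])]
    exact I.mul_mem_left _ (hm _ _)
  · rw [Tsf_eq_mul_of_eqOn_ne F β' β t' fun u hu => Function.update_of_ne hu _ _]
    exact I.mul_mem_left _ (h₁ _ _)

lemma Tsf_mem_span_evenWalks {s : ℕ} (α β : Fin s → Fin q) :
    Tsf K F α β ∈ Ideal.span ({g | g ∈ reesIdeal K F ∧ g.IsHomogeneous 1} ∪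
      {p | ∃ (i : ℕ) (α β : Fin i → Fin q), IsEvenWalk F α β ∧ p = Tsf K F α β}) := by
  set I := Ideal.span ({g | g ∈ reesIdeal K F ∧ g.IsHomogeneous 1} ∪
      {p | ∃ (i : ℕ) (α β : Fin i → Fin q), IsEvenWalk F α β ∧ p = Tsf K F α β})
  have h₁ : ∀ α β : Fin 1 → Fin q, Tsf K F α β ∈ I := fun α β =>
    Ideal.subset_span (Or.inl ⟨Tsf_mem_reesIdeal F α β, Tsf_isHomogeneous F α β⟩)
  induction s with
  | zero => rw [Subsingleton.elim α β, Tsf_self]; exact I.zero_mem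
  | succ m ih =>
    obtain rfl | hm := Nat.eq_zero_or_pos m
    · exact h₁ α β
    by_cases hshared : ∃ t t', α t = β t'
    · obtain ⟨t, t', h⟩ := hshared
      rw [Tsf_eq_X_mul_of_eq F α β h]
      exact I.mul_mem_left _ (ih _ _)
    have hdis : Disjoint (Set.range α) (Set.range β) :=
      Set.disjoint_range_iff.2 fun t t' h => hshared ⟨t, t', h⟩
    by_cases hwalk : IsEvenWalk F α β
    · exact Ideal.subset_span (Or.inr ⟨m + 1, α, β, hwalk, rfl⟩)
    obtain ⟨_, ⟨t, rfl⟩, _, ⟨t', rfl⟩, hsub⟩ :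
        ∃ i ∈ Set.range α, ∃ j ∈ Set.range β,
        ↑(F i \ F j) ⊆ {x | walkDeg F β x < walkDeg F α x} ∨
        ↑(F j \ F i) ⊆ {x | walkDeg F α x < walkDeg F β x} := by
      by_contra! h
      exact hwalk ⟨by omega, hdis, h⟩
    rcases hsub with hsub | hsub
    · exact Tsf_mem_of_sdiff_subset F h₁ ih hsub
    · rw [Tsf_swap]
      exact I.neg_mem (Tsf_mem_of_sdiff_subset F h₁ ih hsub)

end

theorem stmt14_general {K : Type*} [Field K] {n q : ℕ}
    (F : Fin q → Finset (Fin n)) :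
    reesIdeal K F = Ideal.span
      ({g | g ∈ reesIdeal K F ∧ g.IsHomogeneous 1} ∪
        {p | ∃ (i : ℕ) (α β : Fin i → Fin q),
          IsEvenWalk F α β ∧ p = Tsf K F α β}) := by
  refine le_antisymm ((reesIdeal_le_span_Tsf F).trans (Ideal.span_le.2 ?_)) (Ideal.span_le.2 ?_)
  · rintro _ ⟨s, α, β, rfl⟩
    exact Tsf_mem_span_evenWalks F α β
  · rintro _ (⟨hp, -⟩ | ⟨s, α, β, -, rfl⟩)
    exacts [hp, Tsf_mem_reesIdeal F α β]

theorem stmt14 {K : Type*} [Field K] {n q : ℕ}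
    (F : Fin q → Finset (Fin n)) (hF : IsFacetFamily F) :
    reesIdeal K F = Ideal.span
      ({g | g ∈ reesIdeal K F ∧ g.IsHomogeneous 1} ∪
        {p | ∃ (i : ℕ) (α β : Fin i → Fin q),
          IsEvenWalk F α β ∧ p = Tsf K F α β}) :=
  stmt14_general F
end
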